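/- Let v_1,...,v_N be orthonormal vectors in a complex Hilbert space H, κ a unit vector, and decompose κ = α·u + β·w with u a unit vector in S = span(v_1,...,v_N), w a unit vector in S^⊥, α, β ≥ 0. Then in the fermionic Fock space, P_1 Ψ = α · a_κ† a_{μ_2}† ⋯ a_{μ_N}† |0⟩, where Ψ = a_{v_1}†⋯a_{v_N}†|0⟩ (up to a phase), P_1 = a_κ† a_κ, and μ_2,...,μ_N is any orthonormal basis of the orthogonal complement of u inside S chosen so that u ∧ μ_2 ∧ ... ∧ μ_N = v_1 ∧ ... ∧ v_N. In particular ‖P_1 Ψ‖² = α², and P_1 Ψ is a single Slater determinant. -/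

import Mathlib

/-!
Write `Ψ = a_u† Φ` with `Φ = a_{μ₂}† ⋯ a_{μ_N}† |0⟩`. Since `κ` is orthogonal to every `μ i`,
`a_κ Φ = 0`, so the mixed anticommutation relation gives `a_κ Ψ = ⟪κ, u⟫ Φ = α Φ`. The same
relation shows `‖a_φ† x‖ = ‖φ‖ ‖x‖` whenever `a_φ x = 0`, whence `‖a_κ† Φ‖ = 1`.
-/

/-- A representation of the canonical anticommutation relations (CAR) over a complex
inner product space `H` of single-particle states, on a complex inner product space `F`
(the Fock space), with creation operators `cre φ` (linear in `φ`), annihilation operators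
`ann φ` (antilinear in `φ`), a cyclic vacuum vector `vac` of unit norm, and
`ann φ` adjoint to `cre φ`. -/
structure CARRep (H : Type*) [NormedAddCommGroup H] [InnerProductSpace ℂ H]
    (F : Type*) [NormedAddCommGroup F] [InnerProductSpace ℂ F] where
  cre : H →ₗ[ℂ] F →ₗ[ℂ] F
  ann : H → F →ₗ[ℂ] F
  ann_add : ∀ φ ψ, ann (φ + ψ) = ann φ + ann ψ
  ann_smul : ∀ (c : ℂ) (φ), ann (c • φ) = (starRingEnd ℂ c) • ann φ
  cre_anticomm : ∀ φ ψ, cre φ ∘ₗ cre ψ + cre ψ ∘ₗ cre φ = 0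
  ann_anticomm : ∀ φ ψ, ann φ ∘ₗ ann ψ + ann ψ ∘ₗ ann φ = 0
  mixed_anticomm : ∀ φ ψ, ann φ ∘ₗ cre ψ + cre ψ ∘ₗ ann φ = (inner ℂ φ ψ : ℂ) • LinearMap.id
  vac : F
  vac_norm : ‖vac‖ = 1
  ann_vac : ∀ φ, ann φ vac = 0
  adjoint_rel : ∀ φ x y, (inner ℂ (cre φ x) y : ℂ) = inner ℂ x (ann φ y)

namespace CARRep

variable {H : Type*} [NormedAddCommGroup H] [InnerProductSpace ℂ H]
  {F : Type*} [NormedAddCommGroup F] [InnerProductSpace ℂ F]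

/-- The Slater-determinant state `a†(v 1) ⋯ a†(v N) |0⟩`. -/
noncomputable def slater (R : CARRep H F) {N : ℕ} (v : Fin N → H) : F :=
  ((List.ofFn fun i => R.cre (v i)).prod : F →ₗ[ℂ] F) R.vac

variable (R : CARRep H F)

lemma ann_cre (φ ψ : H) (x : F) :
    R.ann φ (R.cre ψ x) = (inner ℂ φ ψ : ℂ) • x - R.cre ψ (R.ann φ x) := by
  rw [eq_sub_iff_add_eq]
  simpa using LinearMap.congr_fun (R.mixed_anticomm φ ψ) x

lemma ann_cre_of_ann_eq_zero {φ : H} (ψ : H) {x : F} (h : R.ann φ x = 0) :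
    R.ann φ (R.cre ψ x) = (inner ℂ φ ψ : ℂ) • x := by
  rw [ann_cre, h, map_zero, sub_zero]

lemma norm_cre_of_ann_eq_zero {φ : H} {x : F} (h : R.ann φ x = 0) :
    ‖R.cre φ x‖ = ‖φ‖ * ‖x‖ := by
  have hsq : ‖R.cre φ x‖ ^ 2 = (‖φ‖ * ‖x‖) ^ 2 := by
    rw [@norm_sq_eq_re_inner ℂ, R.adjoint_rel, R.ann_cre_of_ann_eq_zero φ h, inner_smul_right,
      inner_self_eq_norm_sq_to_K, inner_self_eq_norm_sq_to_K, mul_pow]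
    norm_cast
  exact (pow_left_inj₀ (norm_nonneg _) (by positivity) two_ne_zero).mp hsq

lemma slater_zero (v : Fin 0 → H) : R.slater v = R.vac := by
  simp [slater]

lemma slater_succ {n : ℕ} (v : Fin (n + 1) → H) :
    R.slater v = R.cre (v 0) (R.slater (Fin.tail v)) := by
  simp [slater, List.ofFn_succ, Fin.tail]

lemma ann_slater_eq_zero {n : ℕ} {φ : H} {v : Fin n → H}
    (h : ∀ i, (inner ℂ φ (v i) : ℂ) = 0) : R.ann φ (R.slater v) = 0 := by
  induction n with
  | zero => rw [slater_zero, R.ann_vac]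
  | succ n ih =>
    rw [slater_succ, ann_cre_of_ann_eq_zero _ _ (ih (v := Fin.tail v) fun i => h i.succ), h 0, zero_smul]

lemma norm_slater {n : ℕ} {v : Fin n → H} (hv : Orthonormal ℂ v) : ‖R.slater v‖ = 1 := by
  induction n with
  | zero => rw [slater_zero, R.vac_norm]
  | succ n ih =>
    have hann : R.ann (v 0) (R.slater (Fin.tail v)) = 0 :=
      R.ann_slater_eq_zero fun i => hv.2 (Fin.succ_ne_zero i).symm
    rw [slater_succ, R.norm_cre_of_ann_eq_zero hann, hv.1 0,
      ih (v := Fin.tail v) (hv.comp Fin.succ (Fin.succ_injective n)), one_mul]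

end CARRep

open CARRep in
theorem P1_single_mode_on_slater_general {H : Type*} [NormedAddCommGroup H] [InnerProductSpace ℂ H]
    {F : Type*} [NormedAddCommGroup F] [InnerProductSpace ℂ F]
    (R : CARRep H F) {N : ℕ} (v : Fin N → H)
    (S : Submodule ℂ H)
    (κ u w : H) (hκn : ‖κ‖ = 1) (hun : ‖u‖ = 1)
    (hu : u ∈ S) (hw : w ∈ Sᗮ)
    (α β : ℝ) (hα : 0 ≤ α)
    (hκ : κ = (α : ℂ) • u + (β : ℂ) • w)
    (μ : Fin (N - 1) → H) (hμ : Orthonormal ℂ μ) (hμS : ∀ i, μ i ∈ S)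
    (hμu : ∀ i, (inner ℂ u (μ i) : ℂ) = 0)
    (hwedge : R.cre u (R.slater μ) = R.slater v)
    (P1 : F →ₗ[ℂ] F) (hP1 : P1 = R.cre κ ∘ₗ R.ann κ) :
    P1 (R.slater v) = (α : ℂ) • R.cre κ (R.slater μ) ∧
    ‖P1 (R.slater v)‖ ^ 2 = α ^ 2 := by
  have hκμ : ∀ i, (inner ℂ κ (μ i) : ℂ) = 0 := fun i => by
    rw [hκ, inner_add_left, inner_smul_left, inner_smul_left, hμu i,
      Submodule.inner_left_of_mem_orthogonal (hμS i) hw, mul_zero, mul_zero, add_zero]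
  have hκu : (inner ℂ κ u : ℂ) = α := by
    rw [hκ, inner_add_left, inner_smul_left, inner_smul_left, inner_self_eq_norm_sq_to_K, hun,
      Submodule.inner_left_of_mem_orthogonal hu hw]
    simp
  have hannμ : R.ann κ (R.slater μ) = 0 := R.ann_slater_eq_zero hκμ
  have hP1v : P1 (R.slater v) = (α : ℂ) • R.cre κ (R.slater μ) := by
    rw [hP1, LinearMap.comp_apply, ← hwedge, R.ann_cre_of_ann_eq_zero u hannμ, hκu, map_smul]
  refine ⟨hP1v, ?_⟩
  rw [hP1v, norm_smul, R.norm_cre_of_ann_eq_zero hannμ, hκn, R.norm_slater hμ,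
    Complex.norm_real, Real.norm_of_nonneg hα, mul_one, mul_one]

open CARRep in
/-- Occupied-outcome single-mode measurement: with `κ = α u + β w`, `u` a unit vector in
`S = span (v 1, …, v N)`, `w` a unit vector in `Sᗮ`, and `μ 2, …, μ N` an orthonormal
family in `S` orthogonal to `u` with `a_u† a_{μ}† ⋯ |0⟩ = a_{v₁}† ⋯ a_{v_N}† |0⟩`, the
projector `P₁ = a_κ† a_κ` maps the Slater determinant `Ψ` to
`α • a_κ† a_{μ₂}† ⋯ a_{μ_N}† |0⟩`; in particular `‖P₁ Ψ‖² = α²` and `P₁ Ψ` is again a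
single Slater determinant. -/
theorem P1_single_mode_on_slater {H : Type*} [NormedAddCommGroup H] [InnerProductSpace ℂ H]
    {F : Type*} [NormedAddCommGroup F] [InnerProductSpace ℂ F]
    (R : CARRep H F) {N : ℕ} (hN : 1 ≤ N) (v : Fin N → H) (hv : Orthonormal ℂ v)
    (S : Submodule ℂ H) (hS : S = Submodule.span ℂ (Set.range v))
    (κ u w : H) (hκn : ‖κ‖ = 1) (hun : ‖u‖ = 1) (hwn : ‖w‖ = 1)
    (hu : u ∈ S) (hw : w ∈ Sᗮ)
    (α β : ℝ) (hα : 0 ≤ α) (hβ : 0 ≤ β) (hαβ : α ^ 2 + β ^ 2 = 1)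
    (hκ : κ = (α : ℂ) • u + (β : ℂ) • w)
    (μ : Fin (N - 1) → H) (hμ : Orthonormal ℂ μ) (hμS : ∀ i, μ i ∈ S)
    (hμu : ∀ i, (inner ℂ u (μ i) : ℂ) = 0)
    (hwedge : R.cre u (R.slater μ) = R.slater v)
    (P1 : F →ₗ[ℂ] F) (hP1 : P1 = R.cre κ ∘ₗ R.ann κ) :
    P1 (R.slater v) = (α : ℂ) • R.cre κ (R.slater μ) ∧
    ‖P1 (R.slater v)‖ ^ 2 = α ^ 2 :=
  P1_single_mode_on_slater_general R v S κ u w hκn hun hu hw α β hα hκ μ hμ hμS hμu hwedge P1 hP1
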